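/- Define c_0 = (1 + (sqrt(2) - 1)*i)/4, c_1 = (1 - (sqrt(2) + 1)*i)/4, c_2 = ((1 + sqrt(2)) + i)/4, c_3 = ((1 - sqrt(2)) + i)/4, and for s = (s_0, s_1, s_2) in {-1,1}^3 set p_3(s) = c_0*s_0 + c_1*s_1 + c_2*s_2 + c_3*s_0*s_1*s_2. Then the map s |-> p_3(s) is a bijection from {-1,1}^3 onto the set of eighth roots of unity {exp(i*pi*k/4) : k = 0, 1, ..., 7}. -/
import Mathlib

noncomputable def p3 (s : Fin 3 → ℝ) : ℂ :=
  ((1 + (Real.sqrt 2 - 1) * Complex.I) / 4) * (s 0)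
    + ((1 - (Real.sqrt 2 + 1) * Complex.I) / 4) * (s 1)
    + (((1 + Real.sqrt 2) + Complex.I) / 4) * (s 2)
    + (((1 - Real.sqrt 2) + Complex.I) / 4) * ((s 0) * (s 1) * (s 2))

noncomputable def E (k : ℕ) : ℂ := Complex.exp (Complex.I * Real.pi * k / 4)

noncomputable def sg : ℕ → Fin 3 → ℝ
  | 0 => ![1, 1, 1]
  | 1 => ![1, -1, 1]
  | 2 => ![-1, -1, 1]
  | 3 => ![1, -1, -1]
  | 4 => ![-1, -1, -1]
  | 5 => ![-1, 1, -1]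
  | 6 => ![1, 1, -1]
  | _ => ![-1, 1, 1]

lemma expv (x : ℝ) :
    Complex.exp (Complex.I * Real.pi * (x : ℂ) / 4)
      = (Real.cos (Real.pi * x / 4) : ℂ) + (Real.sin (Real.pi * x / 4) : ℂ) * Complex.I := by
  rw [show Complex.I * (Real.pi : ℂ) * (x : ℂ) / 4 = ((Real.pi * x / 4 : ℝ) : ℂ) * Complex.I by
    push_cast; ring, Complex.exp_mul_I]
  norm_cast

lemma E_closed (k : ℕ) :
    E k = (Real.cos (Real.pi * (k : ℝ) / 4) : ℂ) + (Real.sin (Real.pi * (k : ℝ) / 4) : ℂ) * Complex.I := by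
  rw [E]; exact_mod_cast expv k

lemma hval : ∀ k < 8, p3 (sg k) = E k := by
  intro k hk
  interval_cases k
  · have h : Real.pi * ((0 : ℕ) : ℝ) / 4 = 0 := by push_cast; ring
    rw [E_closed, h, Real.cos_zero, Real.sin_zero]
    simp only [p3, sg]
    norm_num
    push_cast
    ring
  · have h : Real.pi * ((1 : ℕ) : ℝ) / 4 = Real.pi / 4 := by push_cast; ring
    rw [E_closed, h, Real.cos_pi_div_four, Real.sin_pi_div_four]
    simp only [p3, sg]
    norm_num
    push_cast
    ring
  · have h : Real.pi * ((2 : ℕ) : ℝ) / 4 = Real.pi / 2 := by push_cast; ring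
    rw [E_closed, h, Real.cos_pi_div_two, Real.sin_pi_div_two]
    simp only [p3, sg]
    norm_num
    push_cast
    ring
  · have h : Real.pi * ((3 : ℕ) : ℝ) / 4 = Real.pi - Real.pi / 4 := by push_cast; ring
    rw [E_closed, h, Real.cos_pi_sub, Real.sin_pi_sub, Real.cos_pi_div_four, Real.sin_pi_div_four]
    simp only [p3, sg]
    norm_num
    push_cast
    ring
  · have h : Real.pi * ((4 : ℕ) : ℝ) / 4 = Real.pi := by push_cast; ring
    rw [E_closed, h, Real.cos_pi, Real.sin_pi]
    simp only [p3, sg]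
    norm_num
    push_cast
    ring
  · have h : Real.pi * ((5 : ℕ) : ℝ) / 4 = Real.pi / 4 + Real.pi := by push_cast; ring
    rw [E_closed, h, Real.cos_add_pi, Real.sin_add_pi, Real.cos_pi_div_four, Real.sin_pi_div_four]
    simp only [p3, sg]
    norm_num
    push_cast
    ring
  · have h : Real.pi * ((6 : ℕ) : ℝ) / 4 = Real.pi / 2 + Real.pi := by push_cast; ring
    rw [E_closed, h, Real.cos_add_pi, Real.sin_add_pi, Real.cos_pi_div_two, Real.sin_pi_div_two]
    simp only [p3, sg]
    norm_num
    push_cast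
    ring
  · have h : Real.pi * ((7 : ℕ) : ℝ) / 4 = 2 * Real.pi - Real.pi / 4 := by push_cast; ring
    rw [E_closed, h, Real.cos_two_pi_sub, Real.sin_two_pi_sub, Real.cos_pi_div_four, Real.sin_pi_div_four]
    simp only [p3, sg]
    norm_num
    push_cast
    ring

lemma sg_mem : ∀ k, (∀ i, sg k i = 1 ∨ sg k i = -1) := by
  intro k i
  match k with
  | 0 | 1 | 2 | 3 | 4 | 5 | 6 | (n+7) => simp only [sg] ; fin_cases i <;> norm_num

lemma cube_eq_sg {s : Fin 3 → ℝ} (hs : ∀ i, s i = 1 ∨ s i = -1) :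
    ∃ k < 8, s = sg k := by
  have e : ∀ k : ℕ, k < 8 → s 0 = sg k 0 → s 1 = sg k 1 → s 2 = sg k 2 → ∃ k < 8, s = sg k := by
    intro k hk h0 h1 h2
    refine ⟨k, hk, funext fun i => ?_⟩
    fin_cases i <;> assumption
  rcases hs 0 with h0 | h0 <;> rcases hs 1 with h1 | h1 <;> rcases hs 2 with h2 | h2
  · exact e 0 (by norm_num) (by rw [h0]; simp [sg]) (by rw [h1]; simp [sg]) (by rw [h2]; simp [sg])
  · exact e 6 (by norm_num) (by rw [h0]; simp [sg]) (by rw [h1]; simp [sg]) (by rw [h2]; simp [sg])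
  · exact e 1 (by norm_num) (by rw [h0]; simp [sg]) (by rw [h1]; simp [sg]) (by rw [h2]; simp [sg])
  · exact e 3 (by norm_num) (by rw [h0]; simp [sg]) (by rw [h1]; simp [sg]) (by rw [h2]; simp [sg])
  · exact e 7 (by norm_num) (by rw [h0]; simp [sg]) (by rw [h1]; simp [sg]) (by rw [h2]; simp [sg])
  · exact e 5 (by norm_num) (by rw [h0]; simp [sg]) (by rw [h1]; simp [sg]) (by rw [h2]; simp [sg])
  · exact e 2 (by norm_num) (by rw [h0]; simp [sg]) (by rw [h1]; simp [sg]) (by rw [h2]; simp [sg])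
  · exact e 4 (by norm_num) (by rw [h0]; simp [sg]) (by rw [h1]; simp [sg]) (by rw [h2]; simp [sg])

lemma E_inj {k m : ℕ} (hk : k < 8) (hm : m < 8) (h : E k = E m) : k = m := by
  rw [E, E, Complex.exp_eq_exp_iff_exists_int] at h
  obtain ⟨n, hn⟩ := h
  have hπ : (Real.pi : ℂ) ≠ 0 := by exact_mod_cast Real.pi_ne_zero
  have h2 : Complex.I * Real.pi * (k : ℂ) = Complex.I * Real.pi * ((m : ℂ) + 8 * n) := by
    linear_combination 4 * hn
  have h3 : (k : ℂ) = (m : ℂ) + 8 * n :=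
    mul_left_cancel₀ (mul_ne_zero Complex.I_ne_zero hπ) h2
  have h4 : (k : ℤ) = m + 8 * n := by exact_mod_cast h3
  omega

lemma sg_inj {k m : ℕ} (hk : k < 8) (hm : m < 8) (h : sg k = sg m) : k = m := by
  by_contra hne
  have := hval k hk
  have := hval m hm
  exact hne (E_inj hk hm (by rw [← hval k hk, ← hval m hm, h]))

/-- The explicit `n = 3` phase encoding polynomial is a bijection from the sign
cube `{-1,1}^3` onto the eighth roots of unity `{exp(iπk/4) : k = 0, …, 7}`. -/
theorem p3_bijOn :
    Set.BijOn p3 {s : Fin 3 → ℝ | ∀ i, s i = 1 ∨ s i = -1}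
      {z : ℂ | ∃ k : ℕ, k < 8 ∧ z = Complex.exp (Complex.I * Real.pi * k / 4)} := by
  refine ⟨?_, ?_, ?_⟩
  · intro s hs
    obtain ⟨k, hk, rfl⟩ := cube_eq_sg hs
    refine ⟨k, hk, ?_⟩
    rw [hval k hk, E]
  · intro s hs t ht h
    obtain ⟨k, hk, rfl⟩ := cube_eq_sg hs
    obtain ⟨m, hm, rfl⟩ := cube_eq_sg ht
    rw [hval k hk, hval m hm] at h
    rw [E_inj hk hm h]
  · rintro z ⟨k, hk, rfl⟩
    refine ⟨sg k, sg_mem k, ?_⟩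
    rw [hval k hk, E]
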